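/- arXiv:1708.07164 — 8 statements merged into one kernel-verified Lean document; each statement's English description precedes it below -/
import Mathlib

section
/- Suppose F : ℝ^d → ℝ is twice differentiable with ‖∇²F(x) - ∇²F(x_t)‖ ≤ L‖x - x_t‖ for all x on the segment [x_t, x_t + s_t], and the inexact Hessian H_t satisfies ‖(H_t - ∇²F(x_t)) s_t‖ ≤ ε‖s_t‖. Let m_t(s) = ⟨∇F(x_t), s⟩ + (1/2)⟨s, H_t s⟩ and suppose ‖s_t‖ ≤ Δ_t. Then |F(x_t + s_t) - F(x_t) - m_t(s_t)| ≤ (L/2)Δ_t³ + (ε/2)Δ_t². -/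
/-! Along `t ↦ x + t • s` the Lipschitz Hessian bounds the first-order error of the gradient by
`L t² ‖s‖²`, so the second-order Taylor remainder has derivative at most `L ‖s‖³ t²` and hence
size at most `L ‖s‖³ / 3`. Replacing the exact Hessian by `H_t` in the quadratic term costs at most
`ε ‖s‖² / 2`. -/

open scoped InnerProductSpace

open Set

section

variable {E G : Type*} [NormedAddCommGroup E] [NormedSpace ℝ E]
  [NormedAddCommGroup G] [NormedSpace ℝ G]

theorem norm_sub_sub_fderiv_le_of_lipschitz_fderiv {g : E → G} {g' : E → E →L[ℝ] G}
    {x y : E} {L : ℝ} (hL : 0 ≤ L) (hg : ∀ z ∈ segment ℝ x y, HasFDerivAt g (g' z) z)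
    (hLip : ∀ z ∈ segment ℝ x y, ‖g' z - g' x‖ ≤ L * ‖z - x‖) :
    ‖g y - g x - g' x (y - x)‖ ≤ L * ‖y - x‖ ^ 2 := by
  have key := (convex_segment x y).norm_image_sub_le_of_norm_hasFDerivWithin_le'
    (fun z hz => (hg z hz).hasFDerivWithinAt)
    (fun z hz => (hLip z hz).trans (mul_le_mul_of_nonneg_left (norm_sub_le_of_mem_segment hz) hL))
    (left_mem_segment ℝ x y) (right_mem_segment ℝ x y)
  simpa only [sq, mul_assoc] using key

end

section

variable {E : Type*} [NormedAddCommGroup E] [InnerProductSpace ℝ E] [CompleteSpace E]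

theorem abs_sub_taylor_two_le_of_lipschitz_hessian {f : E → ℝ} {g : E → E}
    {H : E → E →L[ℝ] E} {x s : E} {L : ℝ} (hL : 0 ≤ L)
    (hf : ∀ y ∈ segment ℝ x (x + s), HasGradientAt f (g y) y)
    (hg : ∀ y ∈ segment ℝ x (x + s), HasFDerivAt g (H y) y)
    (hLip : ∀ y ∈ segment ℝ x (x + s), ‖H y - H x‖ ≤ L * ‖y - x‖) :
    |f (x + s) - f x - ⟪g x, s⟫_ℝ - ⟪s, H x s⟫_ℝ / 2| ≤ L / 3 * ‖s‖ ^ 3 := by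
  set c : ℝ → E := fun t => x + t • s
  have hc_mem : ∀ t ∈ Icc (0 : ℝ) 1, c t ∈ segment ℝ x (x + s) := fun t ht => by
    rw [segment_eq_image']
    exact ⟨t, ht, by simp [c]⟩
  set ψ : ℝ → ℝ := fun t => f (c t) - f x - t * ⟪g x, s⟫_ℝ - t ^ 2 / 2 * ⟪s, H x s⟫_ℝ
  set ψ' : ℝ → ℝ := fun t => ⟪g (c t) - g x - H x (c t - x), s⟫_ℝ
  have hψ : ∀ t ∈ Icc (0 : ℝ) 1, HasDerivAt ψ (ψ' t) t := by
    intro t ht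
    have hfc : HasDerivAt (fun t => f (c t)) ⟪g (c t), s⟫_ℝ t := by
      have hc' : HasDerivAt c s t := by
        simpa [c] using ((hasDerivAt_id t).smul_const s).const_add x
      exact (hf _ (hc_mem t ht)).hasFDerivAt.comp_hasDerivAt t hc'
    refine (((hfc.sub_const (f x)).sub ((hasDerivAt_id t).mul_const ⟪g x, s⟫_ℝ)).sub
      (((hasDerivAt_pow 2 t).div_const 2).mul_const ⟪s, H x s⟫_ℝ)).congr_deriv ?_
    simp only [ψ', c, add_sub_cancel_left, map_smul, inner_sub_left, real_inner_smul_left,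
      real_inner_comm s (H x s)]
    ring
  have hψ'_le : ∀ t ∈ Icc (0 : ℝ) 1, ‖ψ' t‖ ≤ L * ‖s‖ ^ 3 * t ^ 2 := by
    intro t ht
    have hsub : segment ℝ x (c t) ⊆ segment ℝ x (x + s) :=
      (convex_segment _ _).segment_subset (left_mem_segment ℝ _ _) (hc_mem t ht)
    have hlin := norm_sub_sub_fderiv_le_of_lipschitz_fderiv hL (fun z hz => hg z (hsub hz))
      (fun z hz => hLip z (hsub hz))
    have hct : ‖c t - x‖ = t * ‖s‖ := by simp [c, norm_smul, abs_of_nonneg ht.1]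
    calc ‖ψ' t‖ ≤ ‖g (c t) - g x - H x (c t - x)‖ * ‖s‖ := abs_real_inner_le_norm _ _
      _ ≤ L * ‖c t - x‖ ^ 2 * ‖s‖ := by gcongr
      _ = L * ‖s‖ ^ 3 * t ^ 2 := by rw [hct]; ring
  have hbound := image_norm_le_of_norm_deriv_right_le_deriv_boundary
    (f := ψ) (B := fun t => L / 3 * ‖s‖ ^ 3 * t ^ 3) (B' := fun t => L * ‖s‖ ^ 3 * t ^ 2)
    (fun t ht => (hψ t ht).continuousAt.continuousWithinAt)
    (fun t ht => (hψ t (Ico_subset_Icc_self ht)).hasDerivWithinAt) (by simp [ψ, c])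
    (fun t => ((hasDerivAt_pow 3 t).const_mul (L / 3 * ‖s‖ ^ 3)).congr_deriv (by ring))
    (fun t ht => hψ'_le t (Ico_subset_Icc_self ht)) (right_mem_Icc.2 zero_le_one)
  have hψ1 : ψ 1 = f (x + s) - f x - ⟪g x, s⟫_ℝ - ⟪s, H x s⟫_ℝ / 2 := by simp [ψ, c]; ring
  simpa [hψ1] using hbound

end

theorem model_discrepancy_TR_general {d : ℕ}
    (F : EuclideanSpace ℝ (Fin d) → ℝ)
    (Hess : EuclideanSpace ℝ (Fin d) →
      (EuclideanSpace ℝ (Fin d) →L[ℝ] EuclideanSpace ℝ (Fin d)))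
    (hF1 : ∀ x, HasGradientAt F (gradient F x) x)
    (hF2 : ∀ x, HasFDerivAt (gradient F) (Hess x) x)
    (xt st : EuclideanSpace ℝ (Fin d)) (L ε Δ : ℝ)
    (hL : 0 < L) (hε : 0 < ε)
    (hLip : ∀ x ∈ segment ℝ xt (xt + st), ‖Hess x - Hess xt‖ ≤ L * ‖x - xt‖)
    (Ht : EuclideanSpace ℝ (Fin d) →L[ℝ] EuclideanSpace ℝ (Fin d))
    (hHt : ‖(Ht - Hess xt) st‖ ≤ ε * ‖st‖)
    (hsΔ : ‖st‖ ≤ Δ)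
    (m : EuclideanSpace ℝ (Fin d) → ℝ)
    (hm : ∀ s, m s = ⟪gradient F xt, s⟫_ℝ + (1 / 2) * ⟪s, Ht s⟫_ℝ) :
    |F (xt + st) - F xt - m st| ≤ L / 2 * Δ ^ 3 + ε / 2 * Δ ^ 2 := by
  have hTaylor := abs_sub_taylor_two_le_of_lipschitz_hessian hL.le (fun y _ => hF1 y)
    (fun y _ => hF2 y) hLip
  have hModel : |⟪st, Ht st⟫_ℝ - ⟪st, Hess xt st⟫_ℝ| ≤ ε * ‖st‖ ^ 2 :=
    calc |⟪st, Ht st⟫_ℝ - ⟪st, Hess xt st⟫_ℝ| = |⟪st, (Ht - Hess xt) st⟫_ℝ| := by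
          rw [sub_apply, inner_sub_right]
      _ ≤ ‖st‖ * ‖(Ht - Hess xt) st‖ := abs_real_inner_le_norm _ _
      _ ≤ ‖st‖ * (ε * ‖st‖) := by gcongr
      _ = ε * ‖st‖ ^ 2 := by ring
  have hΔ3 : L * ‖st‖ ^ 3 ≤ L * Δ ^ 3 := by gcongr
  have hΔ2 : ε * ‖st‖ ^ 2 ≤ ε * Δ ^ 2 := by gcongr
  rw [hm, abs_le]
  rw [abs_le] at hTaylor hModel
  constructor <;> linarith [hTaylor.1, hTaylor.2, hModel.1, hModel.2]

/-- Discrepancy between the quadratic trust-region model with inexact Hessian and the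
true objective. -/
theorem model_discrepancy_TR {d : ℕ}
    (F : EuclideanSpace ℝ (Fin d) → ℝ)
    (Hess : EuclideanSpace ℝ (Fin d) →
      (EuclideanSpace ℝ (Fin d) →L[ℝ] EuclideanSpace ℝ (Fin d)))
    (hF1 : ∀ x, HasGradientAt F (gradient F x) x)
    (hF2 : ∀ x, HasFDerivAt (gradient F) (Hess x) x)
    (xt st : EuclideanSpace ℝ (Fin d)) (L ε Δ : ℝ)
    (hL : 0 < L) (hε : 0 < ε) (hΔ : 0 < Δ)
    (hLip : ∀ x ∈ segment ℝ xt (xt + st), ‖Hess x - Hess xt‖ ≤ L * ‖x - xt‖)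
    (Ht : EuclideanSpace ℝ (Fin d) →L[ℝ] EuclideanSpace ℝ (Fin d))
    (hHt : ‖(Ht - Hess xt) st‖ ≤ ε * ‖st‖)
    (hsΔ : ‖st‖ ≤ Δ)
    (m : EuclideanSpace ℝ (Fin d) → ℝ)
    (hm : ∀ s, m s = ⟪gradient F xt, s⟫_ℝ + (1 / 2) * ⟪s, Ht s⟫_ℝ) :
    |F (xt + st) - F xt - m st| ≤ L / 2 * Δ ^ 3 + ε / 2 * Δ ^ 2 :=
  model_discrepancy_TR_general F Hess hF1 hF2 xt st L ε Δ hL hε hLip Ht hHt hsΔ m hm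
end

section
/- Suppose F : ℝ^d → ℝ is twice differentiable with ‖∇²F(x) - ∇²F(x_t)‖ ≤ L‖x - x_t‖ for all x on the segment [x_t, x_t + s_t], and the inexact Hessian H_t satisfies ‖(H_t - ∇²F(x_t)) s_t‖ ≤ ε‖s_t‖. Let m_t(s) = ⟨∇F(x_t), s⟩ + (1/2)⟨s, H_t s⟩ + (σ_t/3)‖s‖³ with σ_t > 0. Then F(x_t + s_t) - F(x_t) - m_t(s_t) ≤ (L/2 - σ_t/3)‖s_t‖³ + (ε/2)‖s_t‖². -/
open scoped InnerProductSpace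
open Set

/-!
Restricted to the line `t ↦ xt + t • st`, `F` becomes `φ` with
`φ'' t = ⟪∇²F(xt + t • st) st, st⟫`, and the Lipschitz bound gives
`φ'' t - φ'' 0 ≤ L ‖st‖³ t` on `[0, 1]`. The function
`ψ t = φ t - φ 0 - t φ' 0 - t² φ'' 0 / 2 - L ‖st‖³ t³ / 6` then has `ψ'' ≤ 0` and
`ψ 0 = ψ' 0 = 0`, so `ψ 1 ≤ 0`: the second-order Taylor remainder is at most `L ‖st‖³ / 6`.
Replacing `∇²F(xt)` by `Ht` costs at most `ε ‖st‖² / 2` by Cauchy–Schwarz.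
-/

lemma antitoneOn_Icc_of_hasDerivAt_nonpos {f f' : ℝ → ℝ} {a b : ℝ}
    (hf : ∀ t, HasDerivAt f (f' t) t) (hf' : ∀ t ∈ Icc a b, f' t ≤ 0) :
    AntitoneOn f (Icc a b) :=
  antitoneOn_of_hasDerivWithinAt_nonpos (convex_Icc a b)
    (fun t _ ↦ (hf t).continuousAt.continuousWithinAt)
    (fun t _ ↦ (hf t).hasDerivWithinAt) fun t ht ↦ hf' t (interior_subset ht)

theorem taylor_remainder_le_of_deriv2_sub_le {φ φ' φ'' : ℝ → ℝ} {K : ℝ}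
    (hφ : ∀ t, HasDerivAt φ (φ' t) t) (hφ' : ∀ t, HasDerivAt φ' (φ'' t) t)
    (hK : ∀ t ∈ Icc (0 : ℝ) 1, φ'' t - φ'' 0 ≤ K * t) :
    φ 1 - φ 0 - φ' 0 - φ'' 0 / 2 ≤ K / 6 := by
  set ψ' : ℝ → ℝ := fun t ↦ φ' t - φ' 0 - t * φ'' 0 - K / 2 * t ^ 2
  set ψ : ℝ → ℝ := fun t ↦ φ t - φ 0 - t * φ' 0 - t ^ 2 / 2 * φ'' 0 - K / 6 * t ^ 3
  have hψ' : ∀ t, HasDerivAt ψ' (φ'' t - φ'' 0 - K * t) t := fun t ↦ by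
    have h := (((hφ' t).sub_const (φ' 0)).sub ((hasDerivAt_id t).mul_const (φ'' 0))).sub
      ((hasDerivAt_pow 2 t).const_mul (K / 2))
    exact h.congr_deriv (by simp; ring)
  have hψ : ∀ t, HasDerivAt ψ (ψ' t) t := fun t ↦ by
    have h := ((((hφ t).sub_const (φ 0)).sub ((hasDerivAt_id t).mul_const (φ' 0))).sub
      (((hasDerivAt_pow 2 t).div_const 2).mul_const (φ'' 0))).sub
      ((hasDerivAt_pow 3 t).const_mul (K / 6))
    exact h.congr_deriv (by simp [ψ']; ring)
  have hψ'_nonpos : ∀ t ∈ Icc (0 : ℝ) 1, ψ' t ≤ 0 := fun t ht ↦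
    (antitoneOn_Icc_of_hasDerivAt_nonpos hψ' (fun u hu ↦ by linarith [hK u hu])
      (left_mem_Icc.2 zero_le_one) ht ht.1).trans_eq (by simp [ψ'])
  have hψ1 : ψ 1 ≤ ψ 0 := antitoneOn_Icc_of_hasDerivAt_nonpos hψ hψ'_nonpos
    (left_mem_Icc.2 zero_le_one) (right_mem_Icc.2 zero_le_one) zero_le_one
  simp only [ψ] at hψ1
  linarith

variable {E : Type*} [NormedAddCommGroup E] [InnerProductSpace ℝ E]

lemma hasDerivAt_add_smul (x s : E) (t : ℝ) : HasDerivAt (fun u : ℝ ↦ x + u • s) s t := by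
  simpa using ((hasDerivAt_id t).smul_const s).const_add x

lemma HasGradientAt.hasDerivAt_comp_add_smul [CompleteSpace E] {f : E → ℝ} {x s v : E} {t : ℝ}
    (hf : HasGradientAt f v (x + t • s)) :
    HasDerivAt (fun u : ℝ ↦ f (x + u • s)) ⟪v, s⟫_ℝ t := by
  have h := hf.hasFDerivAt.comp_hasDerivAt t (hasDerivAt_add_smul x s t)
  rwa [InnerProductSpace.toDual_apply_apply] at h

lemma HasFDerivAt.hasDerivAt_inner_comp_add_smul {g : E → E} {A : E →L[ℝ] E} {x s : E} {t : ℝ}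
    (hg : HasFDerivAt g A (x + t • s)) :
    HasDerivAt (fun u : ℝ ↦ ⟪g (x + u • s), s⟫_ℝ) ⟪A s, s⟫_ℝ t :=
  (hg.comp_hasDerivAt t (hasDerivAt_add_smul x s t)).inner ℝ (hasDerivAt_const t s) |>.congr_deriv
    (by simp)

lemma inner_apply_self_le (A : E →L[ℝ] E) (s : E) : ⟪A s, s⟫_ℝ ≤ ‖A‖ * ‖s‖ ^ 2 :=
  calc ⟪A s, s⟫_ℝ ≤ ‖A s‖ * ‖s‖ := real_inner_le_norm _ _
    _ ≤ ‖A‖ * ‖s‖ * ‖s‖ := by gcongr; exact A.le_opNorm s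
    _ = ‖A‖ * ‖s‖ ^ 2 := by ring

theorem taylor_remainder_le_of_norm_hessian_sub_le [CompleteSpace E] {f : E → ℝ} {g : E → E}
    {H : E → E →L[ℝ] E} (hf : ∀ y, HasGradientAt f (g y) y) (hg : ∀ y, HasFDerivAt g (H y) y)
    {x s : E} {L : ℝ} (hH : ∀ y ∈ segment ℝ x (x + s), ‖H y - H x‖ ≤ L * ‖y - x‖) :
    f (x + s) - f x - ⟪g x, s⟫_ℝ - ⟪H x s, s⟫_ℝ / 2 ≤ L / 6 * ‖s‖ ^ 3 := by
  have hK : ∀ t ∈ Icc (0 : ℝ) 1, ⟪H (x + t • s) s, s⟫_ℝ - ⟪H x s, s⟫_ℝ ≤ L * ‖s‖ ^ 3 * t := by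
    intro t ht
    have hmem : x + t • s ∈ segment ℝ x (x + s) := by
      rw [segment_eq_image']
      exact ⟨t, ht, by simp⟩
    have hLt : ‖H (x + t • s) - H x‖ ≤ L * t * ‖s‖ := by
      simpa [norm_smul, abs_of_nonneg ht.1, mul_assoc] using hH _ hmem
    calc ⟪H (x + t • s) s, s⟫_ℝ - ⟪H x s, s⟫_ℝ = ⟪(H (x + t • s) - H x) s, s⟫_ℝ := by
          rw [sub_apply, inner_sub_left]
      _ ≤ ‖H (x + t • s) - H x‖ * ‖s‖ ^ 2 := inner_apply_self_le _ _
      _ ≤ L * t * ‖s‖ * ‖s‖ ^ 2 := by gcongr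
      _ = L * ‖s‖ ^ 3 * t := by ring
  have h := taylor_remainder_le_of_deriv2_sub_le (fun t ↦ (hf _).hasDerivAt_comp_add_smul)
    (fun t ↦ (hg _).hasDerivAt_inner_comp_add_smul) fun t ht ↦ by simpa using hK t ht
  simp only [zero_smul, add_zero, one_smul] at h
  linarith

lemma inner_apply_sub_inner_apply_le (A B : E →L[ℝ] E) (s : E) :
    ⟪A s, s⟫_ℝ - ⟪s, B s⟫_ℝ ≤ ‖(B - A) s‖ * ‖s‖ :=
  calc ⟪A s, s⟫_ℝ - ⟪s, B s⟫_ℝ = ⟪-((B - A) s), s⟫_ℝ := by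
        rw [sub_apply, neg_sub, inner_sub_left, real_inner_comm s (B s)]
    _ ≤ ‖-((B - A) s)‖ * ‖s‖ := real_inner_le_norm _ _
    _ = ‖(B - A) s‖ * ‖s‖ := by rw [norm_neg]

theorem model_discrepancy_ARC_general {d : ℕ}
    (F : EuclideanSpace ℝ (Fin d) → ℝ)
    (Hess : EuclideanSpace ℝ (Fin d) →
      (EuclideanSpace ℝ (Fin d) →L[ℝ] EuclideanSpace ℝ (Fin d)))
    (hF1 : ∀ x, HasGradientAt F (gradient F x) x)
    (hF2 : ∀ x, HasFDerivAt (gradient F) (Hess x) x)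
    (xt st : EuclideanSpace ℝ (Fin d)) (L ε σt : ℝ)
    (hL : 0 < L)
    (hLip : ∀ x ∈ segment ℝ xt (xt + st), ‖Hess x - Hess xt‖ ≤ L * ‖x - xt‖)
    (Ht : EuclideanSpace ℝ (Fin d) →L[ℝ] EuclideanSpace ℝ (Fin d))
    (hHt : ‖(Ht - Hess xt) st‖ ≤ ε * ‖st‖)
    (m : EuclideanSpace ℝ (Fin d) → ℝ)
    (hm : ∀ s, m s = ⟪gradient F xt, s⟫_ℝ + (1 / 2) * ⟪s, Ht s⟫_ℝ + σt / 3 * ‖s‖ ^ 3) :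
    F (xt + st) - F xt - m st ≤ (L / 2 - σt / 3) * ‖st‖ ^ 3 + ε / 2 * ‖st‖ ^ 2 := by
  have htaylor := taylor_remainder_le_of_norm_hessian_sub_le hF1 hF2 hLip
  have hinexact : ⟪Hess xt st, st⟫_ℝ - ⟪st, Ht st⟫_ℝ ≤ ε * ‖st‖ ^ 2 :=
    calc _ ≤ ‖(Ht - Hess xt) st‖ * ‖st‖ := inner_apply_sub_inner_apply_le _ _ _
      _ ≤ ε * ‖st‖ * ‖st‖ := by gcongr
      _ = ε * ‖st‖ ^ 2 := by ring
  have hcube : 0 ≤ L * ‖st‖ ^ 3 := by positivity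
  rw [hm]
  linarith

/-- Discrepancy between the cubic-regularized model with inexact Hessian and the
true objective. -/
theorem model_discrepancy_ARC {d : ℕ}
    (F : EuclideanSpace ℝ (Fin d) → ℝ)
    (Hess : EuclideanSpace ℝ (Fin d) →
      (EuclideanSpace ℝ (Fin d) →L[ℝ] EuclideanSpace ℝ (Fin d)))
    (hF1 : ∀ x, HasGradientAt F (gradient F x) x)
    (hF2 : ∀ x, HasFDerivAt (gradient F) (Hess x) x)
    (xt st : EuclideanSpace ℝ (Fin d)) (L ε σt : ℝ)
    (hL : 0 < L) (hε : 0 < ε) (hσ : 0 < σt)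
    (hLip : ∀ x ∈ segment ℝ xt (xt + st), ‖Hess x - Hess xt‖ ≤ L * ‖x - xt‖)
    (Ht : EuclideanSpace ℝ (Fin d) →L[ℝ] EuclideanSpace ℝ (Fin d))
    (hHt : ‖(Ht - Hess xt) st‖ ≤ ε * ‖st‖)
    (m : EuclideanSpace ℝ (Fin d) → ℝ)
    (hm : ∀ s, m s = ⟪gradient F xt, s⟫_ℝ + (1 / 2) * ⟪s, Ht s⟫_ℝ + σt / 3 * ‖s‖ ^ 3) :
    F (xt + st) - F xt - m st ≤ (L / 2 - σt / 3) * ‖st‖ ^ 3 + ε / 2 * ‖st‖ ^ 2 :=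
  model_discrepancy_ARC_general F Hess hF1 hF2 xt st L ε σt hL hLip Ht hHt m hm
end

section
/- Let g ∈ ℝ^d with g ≠ 0, H ∈ ℝ^{d×d} symmetric with ‖H‖ ≤ K_H, σ > 0, and define m(s) = ⟨g, s⟩ + (1/2)⟨s, H s⟩ + (σ/3)‖s‖³. Let s^C = -α g where α minimizes α̂ ↦ m(-α̂ g) over α̂ ≥ 0. Then ‖s^C‖ ≥ (1/(2σ))(√(K_H² + 4σ‖g‖) - K_H). -/
/-!
Along the ray `β ↦ -(β • g)` the model, written in the step length `t = β‖g‖`, is the cubic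
`σ/3 t³ + κ/2 t² - ‖g‖ t` with `κ` the Rayleigh quotient of `H` at `g`, so `κ ≤ ‖H‖ ≤ K_H`.
The bound is the positive root `τ` of `σ t² + K_H t = ‖g‖`: for `0 ≤ t < τ` the secant slope
of the cubic between `t` and `τ` is below `σ τ² + K_H τ - ‖g‖ = 0`, so no such `t` is a minimizer.
-/

open scoped InnerProductSpace

/-- The positive root of `a t² + b t = c` (for `0 < a`, `0 ≤ c`). -/
noncomputable def positiveRoot (a b c : ℝ) : ℝ := 1 / (2 * a) * (√(b ^ 2 + 4 * a * c) - b)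

lemma positiveRoot_eq {σ K G : ℝ} (hσ : 0 < σ) (hG : 0 ≤ G) :
    σ * positiveRoot σ K G ^ 2 + K * positiveRoot σ K G = G := by
  unfold positiveRoot
  set r := √(K ^ 2 + 4 * σ * G)
  have hsq : r ^ 2 = K ^ 2 + 4 * σ * G := Real.sq_sqrt (by positivity)
  field_simp
  linear_combination hsq

lemma positiveRoot_nonneg {σ K G : ℝ} (hσ : 0 < σ) (hG : 0 ≤ G) :
    0 ≤ positiveRoot σ K G := by
  have hKr : K ≤ √(K ^ 2 + 4 * σ * G) :=
    Real.le_sqrt_of_sq_le (by nlinarith [mul_nonneg hσ.le hG])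
  have : 0 ≤ √(K ^ 2 + 4 * σ * G) - K := by linarith
  unfold positiveRoot
  positivity

lemma cubic_lt_of_lt_root {σ κ K G t τ : ℝ} (hσ : 0 < σ) (hK : 0 ≤ K) (hκ : κ ≤ K)
    (ht : 0 ≤ t) (htτ : t < τ) (hτ : σ * τ ^ 2 + K * τ = G) :
    σ / 3 * τ ^ 3 + κ / 2 * τ ^ 2 - G * τ < σ / 3 * t ^ 3 + κ / 2 * t ^ 2 - G * t := by
  have hslope : σ / 3 * (τ ^ 2 + τ * t + t ^ 2) + κ / 2 * (τ + t) - G < 0 := by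
    have hquad : σ / 3 * (τ ^ 2 + τ * t + t ^ 2) < σ * τ ^ 2 := by
      have : τ * t + t ^ 2 < 2 * τ ^ 2 := by nlinarith
      nlinarith [mul_lt_mul_of_pos_left this hσ]
    have hlin : κ / 2 * (τ + t) ≤ K * τ := by nlinarith
    linarith
  nlinarith [mul_neg_of_pos_of_neg (sub_pos.mpr htτ) hslope]

section Model

variable {E : Type*} [NormedAddCommGroup E] [InnerProductSpace ℝ E]

lemma rayleighQuotient_le {H : E →L[ℝ] E} {K : ℝ} (hK : ‖H‖ ≤ K) (x : E) :
    H.rayleighQuotient x ≤ K :=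
  (le_abs_self _).trans ((H.rayleighQuotient_le_norm x).trans hK)

lemma cubic_model_neg_smul_eq (g : E) (hg : g ≠ 0) (H : E →L[ℝ] E) (σ : ℝ) {β : ℝ} (hβ : 0 ≤ β) :
    ⟪g, -(β • g)⟫_ℝ + 1 / 2 * ⟪-(β • g), H (-(β • g))⟫_ℝ + σ / 3 * ‖-(β • g)‖ ^ 3
      = σ / 3 * (β * ‖g‖) ^ 3 + H.rayleighQuotient g / 2 * (β * ‖g‖) ^ 2
        - ‖g‖ * (β * ‖g‖) := by
  have hg' : ‖g‖ ≠ 0 := norm_ne_zero_iff.mpr hg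
  simp only [ContinuousLinearMap.rayleighQuotient, ContinuousLinearMap.reApplyInnerSelf_apply,
    RCLike.re_to_real, map_neg, map_smul, inner_neg_left, inner_neg_right, inner_smul_left,
    inner_smul_right, real_inner_self_eq_norm_sq, norm_neg, norm_smul, Real.norm_of_nonneg hβ,
    real_inner_comm g (H g), conj_trivial]
  field_simp
  ring

end Model

theorem cubic_cauchy_step_length_general {d : ℕ}
    (g : EuclideanSpace ℝ (Fin d)) (hg : g ≠ 0)
    (H : EuclideanSpace ℝ (Fin d) →L[ℝ] EuclideanSpace ℝ (Fin d))
    (K_H : ℝ) (hK : ‖H‖ ≤ K_H)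
    (σ : ℝ) (hσ : 0 < σ)
    (m : EuclideanSpace ℝ (Fin d) → ℝ)
    (hm : ∀ s, m s = ⟪g, s⟫_ℝ + (1 / 2) * ⟪s, H s⟫_ℝ + σ / 3 * ‖s‖ ^ 3)
    (α : ℝ) (hα0 : 0 ≤ α)
    (hmin : ∀ β : ℝ, 0 ≤ β → m (-(α • g)) ≤ m (-(β • g))) :
    ‖α • g‖ ≥ (1 / (2 * σ)) * (Real.sqrt (K_H ^ 2 + 4 * σ * ‖g‖) - K_H) := by
  change positiveRoot σ K_H ‖g‖ ≤ ‖α • g‖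
  set τ := positiveRoot σ K_H ‖g‖
  have hgpos : 0 < ‖g‖ := norm_pos_iff.mpr hg
  have hτ0 : 0 ≤ τ := positiveRoot_nonneg hσ hgpos.le
  rw [norm_smul, Real.norm_of_nonneg hα0]
  by_contra! hlt
  have hβ₀ : 0 ≤ τ / ‖g‖ := div_nonneg hτ0 hgpos.le
  have hle := hmin (τ / ‖g‖) hβ₀
  rw [hm, hm, cubic_model_neg_smul_eq g hg H σ hα0, cubic_model_neg_smul_eq g hg H σ hβ₀,
    div_mul_cancel₀ τ hgpos.ne'] at hle
  exact hle.not_gt <| cubic_lt_of_lt_root hσ ((norm_nonneg H).trans hK)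
    (rayleighQuotient_le hK g) (by positivity) (by linarith) (positiveRoot_eq hσ hgpos.le)

/-- Lower bound on the length of the Cauchy step for the cubic-regularized model. -/
theorem cubic_cauchy_step_length {d : ℕ}
    (g : EuclideanSpace ℝ (Fin d)) (hg : g ≠ 0)
    (H : EuclideanSpace ℝ (Fin d) →L[ℝ] EuclideanSpace ℝ (Fin d))
    (hH : IsSelfAdjoint H) (K_H : ℝ) (hK : ‖H‖ ≤ K_H)
    (σ : ℝ) (hσ : 0 < σ)
    (m : EuclideanSpace ℝ (Fin d) → ℝ)
    (hm : ∀ s, m s = ⟪g, s⟫_ℝ + (1 / 2) * ⟪s, H s⟫_ℝ + σ / 3 * ‖s‖ ^ 3)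
    (α : ℝ) (hα0 : 0 ≤ α)
    (hmin : ∀ β : ℝ, 0 ≤ β → m (-(α • g)) ≤ m (-(β • g))) :
    ‖α • g‖ ≥ (1 / (2 * σ)) * (Real.sqrt (K_H ^ 2 + 4 * σ * ‖g‖) - K_H) :=
  cubic_cauchy_step_length_general g hg H K_H hK σ hσ m hm α hα0 hmin
end

section
/- Let g ∈ ℝ^d with g ≠ 0, H ∈ ℝ^{d×d} symmetric with ‖H‖ ≤ K_H, σ > 0, and define m(s) = ⟨g, s⟩ + (1/2)⟨s, H s⟩ + (σ/3)‖s‖³. Let s^C = -α g with α = argmin over α̂ ≥ 0 of m(-α̂ g). Then -m(s^C) ≥ (‖g‖/(2√3)) · min{‖g‖/K_H, √(‖g‖/σ)}. -/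
open scoped InnerProductSpace

set_option maxHeartbeats 1000000 in
/-- Descent bound for the Cauchy direction of the cubic-regularized (ARC) sub-problem model. -/
theorem cubic_cauchy_decrease {d : ℕ}
    (g : EuclideanSpace ℝ (Fin d)) (hg : g ≠ 0)
    (H : EuclideanSpace ℝ (Fin d) →L[ℝ] EuclideanSpace ℝ (Fin d))
    (hH : IsSelfAdjoint H) (K_H : ℝ) (hKpos : 0 < K_H) (hK : ‖H‖ ≤ K_H)
    (σ : ℝ) (hσ : 0 < σ)
    (m : EuclideanSpace ℝ (Fin d) → ℝ)
    (hm : ∀ s, m s = ⟪g, s⟫_ℝ + (1 / 2) * ⟪s, H s⟫_ℝ + σ / 3 * ‖s‖ ^ 3)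
    (α : ℝ) (hα0 : 0 ≤ α)
    (hmin : ∀ β : ℝ, 0 ≤ β → m (-(α • g)) ≤ m (-(β • g))) :
    -(m (-(α • g))) ≥
      ‖g‖ / (2 * Real.sqrt 3) * min (‖g‖ / K_H) (Real.sqrt (‖g‖ / σ)) := by
  have hg0 : (0:ℝ) < ‖g‖ := norm_pos_iff.mpr hg
  set M : ℝ := min (‖g‖ / K_H) (Real.sqrt (‖g‖ / σ)) with hMdef
  have hM0 : 0 < M := lt_min (div_pos hg0 hKpos) (Real.sqrt_pos.mpr (div_pos hg0 hσ))
  have hs3 : (0:ℝ) < Real.sqrt 3 := Real.sqrt_pos.mpr (by norm_num)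
  have hs3l : (1.7:ℝ) ≤ Real.sqrt 3 := by
    have : Real.sqrt (1.7^2) ≤ Real.sqrt 3 := Real.sqrt_le_sqrt (by norm_num)
    rwa [Real.sqrt_sq (by norm_num : (0:ℝ) ≤ 1.7)] at this
  have hs3sq : Real.sqrt 3 ^ 2 = 3 := Real.sq_sqrt (by norm_num)
  set β : ℝ := M / (Real.sqrt 3 * ‖g‖) with hβdef
  have hβ0 : 0 ≤ β := le_of_lt (div_pos hM0 (mul_pos hs3 hg0))
  have hβM : β * (Real.sqrt 3 * ‖g‖) = M :=
    div_mul_cancel₀ _ (ne_of_gt (mul_pos hs3 hg0))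
  -- inner product bound
  have hHg : ‖H g‖ ≤ K_H * ‖g‖ :=
    le_trans (H.le_opNorm g) (mul_le_mul_of_nonneg_right hK (norm_nonneg g))
  have hI : ⟪g, H g⟫_ℝ ≤ K_H * ‖g‖ ^ 2 := by
    calc ⟪g, H g⟫_ℝ ≤ ‖g‖ * ‖H g‖ := real_inner_le_norm g (H g)
      _ ≤ ‖g‖ * (K_H * ‖g‖) := by
          exact mul_le_mul_of_nonneg_left hHg (norm_nonneg g)
      _ = K_H * ‖g‖ ^ 2 := by ring
  -- value of the model on the ray
  have hmβ : m (-(β • g))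
      = -(β * ‖g‖ ^ 2) + β ^ 2 / 2 * ⟪g, H g⟫_ℝ + σ / 3 * (β * ‖g‖) ^ 3 := by
    rw [hm]
    rw [show -(β • g) = (-β) • g from (neg_smul β g).symm]
    rw [real_inner_smul_right, map_smul, real_inner_smul_left, real_inner_smul_right,
      real_inner_self_eq_norm_sq, norm_smul, Real.norm_eq_abs, abs_neg,
      abs_of_nonneg hβ0]
    ring
  -- key scalar bounds
  have h1 : β * K_H * Real.sqrt 3 ≤ 1 := by
    have hMle : M * K_H ≤ ‖g‖ := by
      have := min_le_left (‖g‖ / K_H) (Real.sqrt (‖g‖ / σ))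
      rw [← hMdef] at this
      calc M * K_H ≤ ‖g‖ / K_H * K_H := mul_le_mul_of_nonneg_right this hKpos.le
        _ = ‖g‖ := div_mul_cancel₀ _ (ne_of_gt hKpos)
    have : β * K_H * Real.sqrt 3 * ‖g‖ = M * K_H := by
      rw [← hβM]; ring
    nlinarith [hg0]
  have h2 : σ * β ^ 2 * ‖g‖ ≤ 1 / 3 := by
    have hMle : M ≤ Real.sqrt (‖g‖ / σ) := by
      have := min_le_right (‖g‖ / K_H) (Real.sqrt (‖g‖ / σ))
      rwa [← hMdef] at this
    have hM2 : M ^ 2 * σ ≤ ‖g‖ := by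
      have hsq : Real.sqrt (‖g‖ / σ) ^ 2 = ‖g‖ / σ :=
        Real.sq_sqrt (le_of_lt (div_pos hg0 hσ))
      have : M ^ 2 ≤ ‖g‖ / σ := by nlinarith [hM0.le]
      calc M ^ 2 * σ ≤ ‖g‖ / σ * σ := mul_le_mul_of_nonneg_right this hσ.le
        _ = ‖g‖ := div_mul_cancel₀ _ (ne_of_gt hσ)
    have hβ2 : β ^ 2 * (3 * ‖g‖ ^ 2) = M ^ 2 := by
      have : (β * (Real.sqrt 3 * ‖g‖)) ^ 2 = M ^ 2 := by rw [hβM]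
      nlinarith [this, hs3sq]
    nlinarith [hg0, hσ, sq_nonneg M]
  -- intermediate polynomial bounds
  have c1 : β ^ 2 * Real.sqrt 3 * ⟪g, H g⟫_ℝ ≤ β * ‖g‖ ^ 2 := by
    have hb2 : (0:ℝ) ≤ β ^ 2 * Real.sqrt 3 := by positivity
    have step1 : β ^ 2 * Real.sqrt 3 * ⟪g, H g⟫_ℝ
        ≤ β ^ 2 * Real.sqrt 3 * (K_H * ‖g‖ ^ 2) :=
      mul_le_mul_of_nonneg_left hI hb2
    have step2 : β ^ 2 * Real.sqrt 3 * (K_H * ‖g‖ ^ 2)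
        = (β * K_H * Real.sqrt 3) * (β * ‖g‖ ^ 2) := by ring
    have step3 : (β * K_H * Real.sqrt 3) * (β * ‖g‖ ^ 2) ≤ 1 * (β * ‖g‖ ^ 2) :=
      mul_le_mul_of_nonneg_right h1 (mul_nonneg hβ0 (sq_nonneg ‖g‖))
    linarith [step1, step2 ▸ step1, step3]
  have c2 : 2 * Real.sqrt 3 * (σ / 3) * (β * ‖g‖) ^ 3 ≤
      2 * Real.sqrt 3 * β * ‖g‖ ^ 2 / 9 := by
    have hb : 0 ≤ 2 * Real.sqrt 3 * β * ‖g‖ ^ 2 / 3 :=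
      by positivity
    nlinarith [mul_le_mul_of_nonneg_left h2 hb]
  -- main estimate at β
  have key : ‖g‖ / (2 * Real.sqrt 3) * M ≤ -(m (-(β • g))) := by
    rw [hmβ, div_mul_eq_mul_div, div_le_iff₀ (by positivity : (0:ℝ) < 2 * Real.sqrt 3)]
    have hM : M = β * (Real.sqrt 3 * ‖g‖) := hβM.symm
    rw [hM]
    nlinarith [c1, c2, hs3l, mul_nonneg hβ0 (sq_nonneg ‖g‖), hs3,
      mul_le_mul_of_nonneg_right hs3l (mul_nonneg hβ0 (sq_nonneg ‖g‖))]
  calc ‖g‖ / (2 * Real.sqrt 3) * M ≤ -(m (-(β • g))) := key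
    _ ≤ -(m (-(α • g))) := neg_le_neg (hmin β hβ0)
end

section
/- Let g ∈ ℝ^d, H ∈ ℝ^{d×d} symmetric with λ_min(H) < 0, σ > 0, ν ∈ (0,1], and let u ∈ ℝ^d satisfy ⟨u, H u⟩ ≤ ν λ_min(H)‖u‖² < 0. Define m(s) = ⟨g, s⟩ + (1/2)⟨s, H s⟩ + (σ/3)‖s‖³ and s^E = α u where α = argmin over α̂ ∈ ℝ of m(α̂ u). Then -m(s^E) ≥ (ν|λ_min(H)|/6) · max{‖s^E‖², ν²|λ_min(H)|²/σ²}. -/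
open scoped InnerProductSpace

/-!
Along the line `ℝ u` the model is the one-variable function
`β ↦ a β + (b/2) β² + (c/3) |β|³` with `a = ⟪g, u⟫`, `b = ⟪u, H u⟫ < 0` and `c = σ ‖u‖³`.
At a global minimiser `α`, comparing with `-α` gives `a α ≤ 0`, and comparing with `s α` for
`s` near `1` gives the stationarity condition `a α + b α² + c |α|³ = 0`. Eliminating `c |α|³`,
the optimal value is `(2/3) a α + b α² / 6 ≤ b α² / 6 ≤ ν λ ‖α u‖² / 6`, and eliminating `a α`
instead gives `σ ‖α u‖³ ≥ ν |λ| ‖α u‖²`, i.e. `‖α u‖ ≥ ν |λ| / σ`. Since `b < 0`, the minimum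
is negative, so `α ≠ 0` and this last division is legitimate.
-/

noncomputable def scalarCubicModel (a b c β : ℝ) : ℝ :=
  a * β + b / 2 * β ^ 2 + c / 3 * |β| ^ 3

theorem cubicModel_smul_eq_scalarCubicModel {E : Type*} [NormedAddCommGroup E]
    [InnerProductSpace ℝ E] (g : E) (H : E →L[ℝ] E) (σ : ℝ) (u : E) (β : ℝ) :
    ⟪g, β • u⟫_ℝ + 1 / 2 * ⟪β • u, H (β • u)⟫_ℝ + σ / 3 * ‖β • u‖ ^ 3 =
      scalarCubicModel ⟪g, u⟫_ℝ ⟪u, H u⟫_ℝ (σ * ‖u‖ ^ 3) β := by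
  simp only [scalarCubicModel, map_smul, real_inner_smul_left, real_inner_smul_right, norm_smul,
    Real.norm_eq_abs]
  ring

section Minimiser

variable {a b c α : ℝ}

theorem mul_nonpos_of_scalarCubicModel_le_neg
    (h : scalarCubicModel a b c α ≤ scalarCubicModel a b c (-α)) : a * α ≤ 0 := by
  simp only [scalarCubicModel, abs_neg, neg_sq] at h
  linarith

theorem scalarCubicModel_stationary
    (hmin : ∀ β, scalarCubicModel a b c α ≤ scalarCubicModel a b c β) :
    a * α + b * α ^ 2 + c * |α| ^ 3 = 0 := by
  -- scaling `α` by `s > 0` removes the absolute value, leaving a polynomial in `s`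
  let p : ℝ → ℝ := fun s => a * α * s + b * α ^ 2 / 2 * s ^ 2 + c * |α| ^ 3 / 3 * s ^ 3
  have hp : ∀ s, 0 < s → p s = scalarCubicModel a b c (s * α) := fun s hs => by
    simp only [p, scalarCubicModel, abs_mul, abs_of_pos hs]
    ring
  have hloc : IsLocalMin p 1 := by
    filter_upwards [Ioi_mem_nhds one_pos] with s hs
    rw [hp 1 one_pos, hp s hs, one_mul]
    exact hmin _
  have hderiv : HasDerivAt p (a * α + b * α ^ 2 + c * |α| ^ 3) 1 := by
    refine ((((hasDerivAt_id' (1 : ℝ)).const_mul (a * α)).add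
      ((hasDerivAt_pow 2 (1 : ℝ)).const_mul (b * α ^ 2 / 2))).add
      ((hasDerivAt_pow 3 (1 : ℝ)).const_mul (c * |α| ^ 3 / 3))).congr_deriv ?_
    norm_num
  exact hloc.hasDerivAt_eq_zero hderiv

theorem neg_scalarCubicModel_ge
    (hmin : ∀ β, scalarCubicModel a b c α ≤ scalarCubicModel a b c β) :
    -(b * α ^ 2) / 6 ≤ -scalarCubicModel a b c α := by
  have hneg := mul_nonpos_of_scalarCubicModel_le_neg (hmin (-α))
  have hstat := scalarCubicModel_stationary hmin
  simp only [scalarCubicModel]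
  linarith

theorem neg_mul_sq_le_scalarCubicModel_cube
    (hmin : ∀ β, scalarCubicModel a b c α ≤ scalarCubicModel a b c β) :
    -(b * α ^ 2) ≤ c * |α| ^ 3 := by
  have hneg := mul_nonpos_of_scalarCubicModel_le_neg (hmin (-α))
  have hstat := scalarCubicModel_stationary hmin
  linarith

theorem ne_zero_of_scalarCubicModel_min (hb : b < 0) (hc : 0 < c)
    (hmin : ∀ β, scalarCubicModel a b c α ≤ scalarCubicModel a b c β) : α ≠ 0 := by
  rintro rfl
  -- at `±ε` the values sum to `ε² (b + 2 c ε / 3) = ε² b / 3 < 0` for `ε = -b / c`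
  set ε := -b / c with hε
  have hεc : c * ε = -b := by rw [hε]; field_simp
  have hε_pos : 0 < ε := div_pos (neg_pos.2 hb) hc
  have h₁ := hmin ε
  have h₂ := hmin (-ε)
  simp only [scalarCubicModel, abs_neg, neg_sq, abs_of_pos hε_pos, abs_zero] at h₁ h₂
  nlinarith [mul_pos hε_pos hε_pos]

end Minimiser

theorem cubic_eigen_decrease_general {d : ℕ}
    (g : EuclideanSpace ℝ (Fin d))
    (H : EuclideanSpace ℝ (Fin d) →L[ℝ] EuclideanSpace ℝ (Fin d))
    (lam : ℝ)
    (hlam : lam < 0)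
    (σ ν : ℝ) (hσ : 0 < σ) (hν0 : 0 < ν)
    (u : EuclideanSpace ℝ (Fin d))
    (hu : ⟪u, H u⟫_ℝ ≤ ν * lam * ‖u‖ ^ 2) (hu0 : ν * lam * ‖u‖ ^ 2 < 0)
    (m : EuclideanSpace ℝ (Fin d) → ℝ)
    (hm : ∀ s, m s = ⟪g, s⟫_ℝ + (1 / 2) * ⟪s, H s⟫_ℝ + σ / 3 * ‖s‖ ^ 3)
    (α : ℝ) (hmin : ∀ β : ℝ, m (α • u) ≤ m (β • u)) :
    -(m (α • u)) ≥ ν * |lam| / 6 * max (‖α • u‖ ^ 2) (ν ^ 2 * lam ^ 2 / σ ^ 2) := by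
  have hline : ∀ β : ℝ, m (β • u) = scalarCubicModel ⟪g, u⟫_ℝ ⟪u, H u⟫_ℝ (σ * ‖u‖ ^ 3) β :=
    fun β => by rw [hm, cubicModel_smul_eq_scalarCubicModel]
  simp only [hline] at hmin ⊢
  have hu_ne : u ≠ 0 := by rintro rfl; simp at hu0
  have hα : α ≠ 0 := ne_zero_of_scalarCubicModel_min (hu.trans_lt hu0)
    (by have := norm_pos_iff.2 hu_ne; positivity) hmin
  have ht_eq : ‖α • u‖ = |α| * ‖u‖ := by rw [norm_smul, Real.norm_eq_abs]
  set t := ‖α • u‖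
  have ht : 0 < t := norm_pos_iff.2 (smul_ne_zero hα hu_ne)
  have hcurv : ⟪u, H u⟫_ℝ * α ^ 2 ≤ ν * lam * t ^ 2 :=
    calc ⟪u, H u⟫_ℝ * α ^ 2 ≤ ν * lam * ‖u‖ ^ 2 * α ^ 2 :=
          mul_le_mul_of_nonneg_right hu (sq_nonneg α)
      _ = ν * lam * t ^ 2 := by rw [ht_eq, mul_pow, sq_abs]; ring
  have hκt : ν * |lam| ≤ σ * t := by
    have hcube := neg_mul_sq_le_scalarCubicModel_cube hmin
    have hcube' : ν * |lam| * t ^ 2 ≤ σ * t * t ^ 2 := by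
      rw [abs_of_neg hlam]
      linarith [show σ * ‖u‖ ^ 3 * |α| ^ 3 = σ * t * t ^ 2 by rw [ht_eq]; ring]
    exact le_of_mul_le_mul_right hcube' (by positivity)
  have hmax : max (t ^ 2) (ν ^ 2 * lam ^ 2 / σ ^ 2) = t ^ 2 := by
    refine max_eq_left ?_
    calc ν ^ 2 * lam ^ 2 / σ ^ 2 = (ν * |lam| / σ) ^ 2 := by rw [div_pow, mul_pow, sq_abs]
      _ ≤ t ^ 2 := pow_le_pow_left₀ (by positivity) ((div_le_iff₀' hσ).2 hκt) 2
  rw [hmax, abs_of_neg hlam]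
  linarith [neg_scalarCubicModel_ge hmin]

/-- Descent bound for the negative-curvature (eigen) direction of the cubic-regularized
model.  Here `lam` plays the role of `λ_min(H)`: it is a lower bound on the Rayleigh
quotient of `H` which is attained. -/
theorem cubic_eigen_decrease {d : ℕ}
    (g : EuclideanSpace ℝ (Fin d))
    (H : EuclideanSpace ℝ (Fin d) →L[ℝ] EuclideanSpace ℝ (Fin d))
    (hH : IsSelfAdjoint H)
    (lam : ℝ)
    (hlow : ∀ v : EuclideanSpace ℝ (Fin d), lam * ‖v‖ ^ 2 ≤ ⟪v, H v⟫_ℝ)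
    (hach : ∃ v : EuclideanSpace ℝ (Fin d), v ≠ 0 ∧ ⟪v, H v⟫_ℝ = lam * ‖v‖ ^ 2)
    (hlam : lam < 0)
    (σ ν : ℝ) (hσ : 0 < σ) (hν0 : 0 < ν) (hν1 : ν ≤ 1)
    (u : EuclideanSpace ℝ (Fin d))
    (hu : ⟪u, H u⟫_ℝ ≤ ν * lam * ‖u‖ ^ 2) (hu0 : ν * lam * ‖u‖ ^ 2 < 0)
    (m : EuclideanSpace ℝ (Fin d) → ℝ)
    (hm : ∀ s, m s = ⟪g, s⟫_ℝ + (1 / 2) * ⟪s, H s⟫_ℝ + σ / 3 * ‖s‖ ^ 3)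
    (α : ℝ) (hmin : ∀ β : ℝ, m (α • u) ≤ m (β • u)) :
    -(m (α • u)) ≥ ν * |lam| / 6 * max (‖α • u‖ ^ 2) (ν ^ 2 * lam ^ 2 / σ ^ 2) :=
  cubic_eigen_decrease_general g H lam hlam σ ν hσ hν0 u hu hu0 m hm α hmin
end

section
/- Let g ∈ ℝ^d, H symmetric with λ_min(H) < 0, σ > 0, ν ∈ (0,1], and u satisfy ⟨u, H u⟩ ≤ ν λ_min(H)‖u‖² < 0. Let s^E = α u where α minimizes m(α̂ u) = ⟨g, α̂ u⟩ + (α̂²/2)⟨u, H u⟩ + (σ/3)|α̂|³‖u‖³ over α̂ ∈ ℝ. Then σ‖s^E‖ ≥ ν|λ_min(H)|. -/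
/-!
Along the line `β ↦ β • u` the model is the one-dimensional cubic
`φ(β) = c β + (b / 2) β² + (a / 3) |β|³` with `c = ⟪g, u⟫`, `b = ⟪u, H u⟫ < 0` and `a = σ ‖u‖³ > 0`.
At a global minimiser `α`, comparing with `-α` gives `c α ≤ 0`, and stationarity of `t ↦ φ(t α)` at
`t = 1` gives `c α + b α² + a |α|³ = 0`; hence `α² (b + a |α|) ≥ 0`. Since `b < 0` the minimum value
is negative, so `α ≠ 0` and `a |α| ≥ -b ≥ ν |λ| ‖u‖²`, which is the claim after dividing by `‖u‖²`.
-/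

open scoped InnerProductSpace

noncomputable def cubicModel (c b a β : ℝ) : ℝ :=
  c * β + b / 2 * β ^ 2 + a / 3 * |β| ^ 3

namespace cubicModel

variable {c b a α : ℝ}

lemma mul_nonpos_of_isMin (hmin : ∀ β, cubicModel c b a α ≤ cubicModel c b a β) :
    c * α ≤ 0 := by
  have h := hmin (-α)
  simp only [cubicModel, abs_neg, neg_sq] at h
  linarith

lemma stationary_of_isMin (hmin : ∀ β, cubicModel c b a α ≤ cubicModel c b a β) :
    c * α + b * α ^ 2 + a * |α| ^ 3 = 0 := by
  set ψ : ℝ → ℝ := fun t ↦ c * α * t + b * α ^ 2 / 2 * t ^ 2 + a * |α| ^ 3 / 3 * t ^ 3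
  have hψ : ∀ t, 0 < t → ψ t = cubicModel c b a (t * α) := fun t ht ↦ by
    simp only [ψ, cubicModel, abs_mul, abs_of_pos ht]
    ring
  have hloc : IsLocalMin ψ 1 :=
    Filter.eventually_of_mem (Ioi_mem_nhds one_pos) fun t ht ↦ by
      rw [hψ 1 one_pos, hψ t ht, one_mul]
      exact hmin _
  have hderiv : HasDerivAt ψ (c * α + b * α ^ 2 + a * |α| ^ 3) 1 := by
    have := (((hasDerivAt_id (1 : ℝ)).const_mul (c * α)).add
      ((hasDerivAt_pow 2 (1 : ℝ)).const_mul (b * α ^ 2 / 2))).add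
      ((hasDerivAt_pow 3 (1 : ℝ)).const_mul (a * |α| ^ 3 / 3))
    exact this.congr_deriv (by norm_num)
  exact hloc.hasDerivAt_eq_zero hderiv

lemma ne_zero_of_isMin (ha : 0 < a) (hb : b < 0)
    (hmin : ∀ β, cubicModel c b a α ≤ cubicModel c b a β) : α ≠ 0 := by
  rintro rfl
  -- `φ(ε) + φ(-ε) = ε² (b + 2 a ε / 3) = ε² b / 3 < 0` for `ε = -b / a`.
  set ε := -b / a
  have hε : 0 < ε := div_pos (neg_pos.mpr hb) ha
  have hsum : cubicModel c b a ε + cubicModel c b a (-ε) = ε ^ 2 * b / 3 := by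
    simp only [cubicModel, abs_neg, neg_sq, abs_of_pos hε, ε]
    field_simp
    ring
  have hzero : cubicModel c b a 0 = 0 := by simp [cubicModel]
  linarith [hmin ε, hmin (-ε), mul_neg_of_pos_of_neg (pow_pos hε 2) hb]

lemma neg_le_mul_abs_of_isMin (ha : 0 < a) (hb : b < 0)
    (hmin : ∀ β, cubicModel c b a α ≤ cubicModel c b a β) : -b ≤ a * |α| := by
  have hfactor : α ^ 2 * (b + a * |α|) = -(c * α) := by
    linear_combination stationary_of_isMin hmin - a * |α| * sq_abs α
  have hnonneg : 0 ≤ α ^ 2 * (b + a * |α|) := by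
    rw [hfactor]
    exact neg_nonneg.mpr (mul_nonpos_of_isMin hmin)
  linarith [nonneg_of_mul_nonneg_right hnonneg (sq_pos_of_ne_zero (ne_zero_of_isMin ha hb hmin))]

end cubicModel

lemma cubicModel_eq_along_line {E : Type*} [NormedAddCommGroup E] [InnerProductSpace ℝ E]
    (g u : E) (H : E →L[ℝ] E) (σ β : ℝ) :
    ⟪g, β • u⟫_ℝ + 1 / 2 * ⟪β • u, H (β • u)⟫_ℝ + σ / 3 * ‖β • u‖ ^ 3 =
      cubicModel ⟪g, u⟫_ℝ ⟪u, H u⟫_ℝ (σ * ‖u‖ ^ 3) β := by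
  simp only [cubicModel, map_smul, real_inner_smul_left, real_inner_smul_right, norm_smul,
    Real.norm_eq_abs]
  ring

theorem cubic_eigen_step_length_general {d : ℕ}
    (g : EuclideanSpace ℝ (Fin d))
    (H : EuclideanSpace ℝ (Fin d) →L[ℝ] EuclideanSpace ℝ (Fin d))
    (lam : ℝ)
    (σ ν : ℝ) (hσ : 0 < σ)
    (u : EuclideanSpace ℝ (Fin d))
    (hu : ⟪u, H u⟫_ℝ ≤ ν * lam * ‖u‖ ^ 2) (hu0 : ν * lam * ‖u‖ ^ 2 < 0)
    (m : EuclideanSpace ℝ (Fin d) → ℝ)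
    (hm : ∀ s, m s = ⟪g, s⟫_ℝ + (1 / 2) * ⟪s, H s⟫_ℝ + σ / 3 * ‖s‖ ^ 3)
    (α : ℝ) (hmin : ∀ β : ℝ, m (α • u) ≤ m (β • u)) :
    σ * ‖α • u‖ ≥ ν * |lam| := by
  have hu_pos : 0 < ‖u‖ := norm_pos_iff.mpr fun h ↦ by simp [h] at hu0
  have hmin' : ∀ β, cubicModel ⟪g, u⟫_ℝ ⟪u, H u⟫_ℝ (σ * ‖u‖ ^ 3) α ≤
      cubicModel ⟪g, u⟫_ℝ ⟪u, H u⟫_ℝ (σ * ‖u‖ ^ 3) β := fun β ↦ by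
    simpa only [hm, cubicModel_eq_along_line] using hmin β
  have hstep := cubicModel.neg_le_mul_abs_of_isMin (by positivity) (hu.trans_lt hu0) hmin'
  have hlam : ν * |lam| ≤ -(ν * lam) := by
    have hneg : ν * lam < 0 := neg_of_mul_neg_left hu0 (by positivity)
    calc ν * |lam| ≤ |ν| * |lam| := mul_le_mul_of_nonneg_right (le_abs_self ν) (abs_nonneg lam)
      _ = -(ν * lam) := by rw [← abs_mul, abs_of_neg hneg]
  refine le_of_mul_le_mul_right ?_ (pow_pos hu_pos 2)
  calc ν * |lam| * ‖u‖ ^ 2 ≤ -(ν * lam * ‖u‖ ^ 2) := by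
        rw [← neg_mul]; exact mul_le_mul_of_nonneg_right hlam (sq_nonneg _)
    _ ≤ -⟪u, H u⟫_ℝ := neg_le_neg hu
    _ ≤ σ * ‖u‖ ^ 3 * |α| := hstep
    _ = σ * ‖α • u‖ * ‖u‖ ^ 2 := by rw [norm_smul, Real.norm_eq_abs]; ring

/-- Lower bound on the step length along an approximate negative curvature direction in
cubic regularization.  Here `lam` plays the role of `λ_min(H)`. -/
theorem cubic_eigen_step_length {d : ℕ}
    (g : EuclideanSpace ℝ (Fin d))
    (H : EuclideanSpace ℝ (Fin d) →L[ℝ] EuclideanSpace ℝ (Fin d))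
    (hH : IsSelfAdjoint H)
    (lam : ℝ)
    (hlow : ∀ v : EuclideanSpace ℝ (Fin d), lam * ‖v‖ ^ 2 ≤ ⟪v, H v⟫_ℝ)
    (hach : ∃ v : EuclideanSpace ℝ (Fin d), v ≠ 0 ∧ ⟪v, H v⟫_ℝ = lam * ‖v‖ ^ 2)
    (hlam : lam < 0)
    (σ ν : ℝ) (hσ : 0 < σ) (hν0 : 0 < ν) (hν1 : ν ≤ 1)
    (u : EuclideanSpace ℝ (Fin d))
    (hu : ⟪u, H u⟫_ℝ ≤ ν * lam * ‖u‖ ^ 2) (hu0 : ν * lam * ‖u‖ ^ 2 < 0)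
    (m : EuclideanSpace ℝ (Fin d) → ℝ)
    (hm : ∀ s, m s = ⟪g, s⟫_ℝ + (1 / 2) * ⟪s, H s⟫_ℝ + σ / 3 * ‖s‖ ^ 3)
    (α : ℝ) (hmin : ∀ β : ℝ, m (α • u) ≤ m (β • u)) :
    σ * ‖α • u‖ ≥ ν * |lam| :=
  cubic_eigen_step_length_general g H lam σ ν hσ u hu hu0 m hm α hmin
end

section
/- Let m(s) = ⟨g, s⟩ + (1/2)⟨s, H s⟩ + (σ/3)‖s‖³ with σ > 0, and suppose s ∈ ℝ^d satisfies ⟨g, s⟩ + ⟨s, H s⟩ + σ‖s‖³ = 0 and ⟨s, H s⟩ + σ‖s‖³ ≥ 0. Then -m(s) ≥ (σ/6)‖s‖³. -/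
open scoped InnerProductSpace

/-- Key model-decrease identity from Cartis et al. used throughout the ARC analysis. -/
theorem cubic_model_decrease {d : ℕ}
    (g s : EuclideanSpace ℝ (Fin d))
    (H : EuclideanSpace ℝ (Fin d) →L[ℝ] EuclideanSpace ℝ (Fin d))
    (hH : IsSelfAdjoint H) (σ : ℝ) (hσ : 0 < σ)
    (m : EuclideanSpace ℝ (Fin d) → ℝ)
    (hm : ∀ v, m v = ⟪g, v⟫_ℝ + (1 / 2) * ⟪v, H v⟫_ℝ + σ / 3 * ‖v‖ ^ 3)
    (h1 : ⟪g, s⟫_ℝ + ⟪s, H s⟫_ℝ + σ * ‖s‖ ^ 3 = 0)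
    (h2 : ⟪s, H s⟫_ℝ + σ * ‖s‖ ^ 3 ≥ 0) :
    -(m s) ≥ σ / 6 * ‖s‖ ^ 3 := by
  rw [hm]; nlinarith [h1, h2]
end

section
/- Suppose F is twice differentiable, ‖∇²F(x_t + τ s_t) - ∇²F(x_t)‖ ≤ L τ‖s_t‖ for τ ∈ [0,1], ‖(∇²F(x_t) - H_t)s_t‖ ≤ ε_t‖s_t‖, and σ_t ≤ 2γL. Let ∇m_t(s_t) = ∇F(x_t) + H_t s_t + σ_t‖s_t‖s_t. Then ‖∇F(x_t + s_t) - ∇m_t(s_t)‖ ≤ (L/2 + 2γL)‖s_t‖² + ε_t‖s_t‖. -/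
/-!
Split `∇F(x + s) - ∇m(s)` into the Taylor remainder `∇F(x + s) - ∇F(x) - ∇²F(x) s`, the Hessian
mismatch `(∇²F(x) - H) s` and the regularization term `σ ‖s‖ s`. The Lipschitz bound on the Hessian
along the step gives `L/2 ‖s‖²` for the first, and `σ ≤ 2γL` gives `2γL ‖s‖²` for the last.
-/

open Set

-- Fence `‖f τ - f 0‖` by `C τ² / 2`, whose derivative is `C τ`.
theorem norm_sub_le_half_of_norm_deriv_le_mul {E : Type*} [NormedAddCommGroup E]
    [NormedSpace ℝ E] {f f' : ℝ → E} {C : ℝ}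
    (hf : ∀ τ ∈ Icc (0 : ℝ) 1, HasDerivAt f (f' τ) τ)
    (bound : ∀ τ ∈ Ico (0 : ℝ) 1, ‖f' τ‖ ≤ C * τ) :
    ‖f 1 - f 0‖ ≤ C / 2 := by
  have hB : ∀ τ : ℝ, HasDerivAt (fun τ => C / 2 * τ ^ 2) (C * τ) τ := fun τ =>
    ((hasDerivAt_pow 2 τ).const_mul (C / 2)).congr_deriv (by push_cast; ring)
  have fence := image_norm_le_of_norm_deriv_right_le_deriv_boundary
    (f := fun τ => f τ - f 0) (f' := f')
    (fun τ hτ => ((hf τ hτ).sub_const (f 0)).continuousAt.continuousWithinAt)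
    (fun τ hτ => ((hf τ (Ico_subset_Icc_self hτ)).sub_const (f 0)).hasDerivWithinAt)
    (by simp) hB bound (right_mem_Icc.2 zero_le_one)
  simpa using fence

theorem norm_image_add_sub_sub_fderiv_le {E F : Type*} [NormedAddCommGroup E] [NormedSpace ℝ E]
    [NormedAddCommGroup F] [NormedSpace ℝ F] {g : E → F} {g' : E → E →L[ℝ] F} {x s : E} {L : ℝ}
    (hg : ∀ τ ∈ Icc (0 : ℝ) 1, HasFDerivAt g (g' (x + τ • s)) (x + τ • s))
    (hLip : ∀ τ ∈ Icc (0 : ℝ) 1, ‖g' (x + τ • s) - g' x‖ ≤ L * τ * ‖s‖) :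
    ‖g (x + s) - g x - g' x s‖ ≤ L / 2 * ‖s‖ ^ 2 := by
  have hline : ∀ τ : ℝ, HasDerivAt (fun τ : ℝ => x + τ • s) s τ := fun τ => by
    simpa using ((hasDerivAt_id τ).smul_const s).const_add x
  have hderiv : ∀ τ ∈ Icc (0 : ℝ) 1, HasDerivAt (fun τ : ℝ => g (x + τ • s) - τ • g' x s)
      ((g' (x + τ • s) - g' x) s) τ := fun τ hτ => by
    simpa using ((hg τ hτ).comp_hasDerivAt τ (hline τ)).fun_sub
      ((hasDerivAt_id τ).smul_const (g' x s))
  have bound : ∀ τ ∈ Ico (0 : ℝ) 1, ‖(g' (x + τ • s) - g' x) s‖ ≤ L * ‖s‖ ^ 2 * τ :=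
    fun τ hτ => calc
      ‖(g' (x + τ • s) - g' x) s‖ ≤ ‖g' (x + τ • s) - g' x‖ * ‖s‖ := (g' _ - g' x).le_opNorm s
      _ ≤ L * τ * ‖s‖ * ‖s‖ := by gcongr; exact hLip τ (Ico_subset_Icc_self hτ)
      _ = L * ‖s‖ ^ 2 * τ := by ring
  have taylor := norm_sub_le_half_of_norm_deriv_le_mul hderiv bound
  simp only [one_smul, zero_smul, add_zero, sub_zero] at taylor
  rw [sub_right_comm]
  exact taylor.trans_eq (by ring)

theorem cubic_model_gradient_bound_general {d : ℕ}
    (F : EuclideanSpace ℝ (Fin d) → ℝ)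
    (Hess : EuclideanSpace ℝ (Fin d) →
      (EuclideanSpace ℝ (Fin d) →L[ℝ] EuclideanSpace ℝ (Fin d)))
    (hF2 : ∀ x, HasFDerivAt (gradient F) (Hess x) x)
    (xt st : EuclideanSpace ℝ (Fin d)) (L εt γ σt : ℝ)
    (hσpos : 0 < σt)
    (hLip : ∀ τ : ℝ, τ ∈ Set.Icc (0 : ℝ) 1 →
      ‖Hess (xt + τ • st) - Hess xt‖ ≤ L * τ * ‖st‖)
    (Ht : EuclideanSpace ℝ (Fin d) →L[ℝ] EuclideanSpace ℝ (Fin d))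
    (hHt : ‖(Hess xt - Ht) st‖ ≤ εt * ‖st‖)
    (hσ : σt ≤ 2 * γ * L) :
    ‖gradient F (xt + st) - (gradient F xt + Ht st + (σt * ‖st‖) • st)‖ ≤
      (L / 2 + 2 * γ * L) * ‖st‖ ^ 2 + εt * ‖st‖ := by
  set g := gradient F
  have taylor : ‖g (xt + st) - g xt - Hess xt st‖ ≤ L / 2 * ‖st‖ ^ 2 :=
    norm_image_add_sub_sub_fderiv_le (fun τ _ => hF2 _) hLip
  have regularization : ‖(σt * ‖st‖) • st‖ ≤ 2 * γ * L * ‖st‖ ^ 2 := by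
    rw [norm_smul, Real.norm_of_nonneg (by positivity)]
    nlinarith [sq_nonneg ‖st‖]
  have split : g (xt + st) - (g xt + Ht st + (σt * ‖st‖) • st)
      = (g (xt + st) - g xt - Hess xt st) + (Hess xt - Ht) st - (σt * ‖st‖) • st := by
    simp only [sub_apply]
    abel
  rw [split]
  calc _ ≤ ‖g (xt + st) - g xt - Hess xt st‖ + ‖(Hess xt - Ht) st‖ + ‖(σt * ‖st‖) • st‖ :=
        norm_sub_le_of_le (norm_add_le _ _) le_rfl
    _ ≤ (L / 2 + 2 * γ * L) * ‖st‖ ^ 2 + εt * ‖st‖ := by linarith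

/-- Bound on the gradient of the objective at the trial point against the gradient of the
cubic model: `‖∇F(x_t + s_t) - ∇m_t(s_t)‖ ≤ (L/2 + 2γL)‖s_t‖² + ε_t‖s_t‖`. -/
theorem cubic_model_gradient_bound {d : ℕ}
    (F : EuclideanSpace ℝ (Fin d) → ℝ)
    (Hess : EuclideanSpace ℝ (Fin d) →
      (EuclideanSpace ℝ (Fin d) →L[ℝ] EuclideanSpace ℝ (Fin d)))
    (hF1 : ∀ x, HasGradientAt F (gradient F x) x)
    (hF2 : ∀ x, HasFDerivAt (gradient F) (Hess x) x)
    (xt st : EuclideanSpace ℝ (Fin d)) (L εt γ σt : ℝ)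
    (hL : 0 < L) (hεt : 0 ≤ εt) (hγ : 1 < γ) (hσpos : 0 < σt)
    (hLip : ∀ τ : ℝ, τ ∈ Set.Icc (0 : ℝ) 1 →
      ‖Hess (xt + τ • st) - Hess xt‖ ≤ L * τ * ‖st‖)
    (Ht : EuclideanSpace ℝ (Fin d) →L[ℝ] EuclideanSpace ℝ (Fin d))
    (hHt : ‖(Hess xt - Ht) st‖ ≤ εt * ‖st‖)
    (hσ : σt ≤ 2 * γ * L) :
    ‖gradient F (xt + st) - (gradient F xt + Ht st + (σt * ‖st‖) • st)‖ ≤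
      (L / 2 + 2 * γ * L) * ‖st‖ ^ 2 + εt * ‖st‖ :=
  cubic_model_gradient_bound_general F Hess hF2 xt st L εt γ σt hσpos hLip Ht hHt hσ
end
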